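/- For every integer k ≥ 0, the sum of the entries of the vector w_k equals √(μ_k - 1). -/

import Mathlib

/-- β_i = 1 + (1+√2)^{i-1} (real exponent). -/
noncomputable def beta (i : ℕ) : ℝ := 1 + (1 + Real.sqrt 2) ^ ((i : ℝ) - 1)

/-- π^(ℓ) ∈ ℝ^{2^ℓ - 1}, with i-th entry β_{ν(i)} (ν the 2-adic valuation). -/
noncomputable def piList (ℓ : ℕ) : List ℝ :=
  (List.range (2 ^ ℓ - 1)).map fun i => beta (padicValNat 2 (i + 1))

/-!
Splitting the indices of `π^(ℓ+1)` at `2^ℓ` gives `π^(ℓ+1) = π^(ℓ) ++ β_ℓ :: π^(ℓ)`, whence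
`Σ π^(ℓ) = (1+√2)^ℓ - 1` because `(1+√2)⁻¹ = √2 - 1`. So the entries of `w_{k+1}` in front of
`w_k` add up to `2(β_{k+1} - 1)/√(μ_{k+1} - 1)`. The quadratic equation for `α_k` says exactly that
`(μ_k - 1)(μ_{k+1} - 1) = (μ_k - 1 + 2(α_k - 1))²`, which gives
`2(β_{k+1} - 1) + √((μ_k - 1)(μ_{k+1} - 1)) = μ_{k+1} - 1`, and the claim follows by induction on `k`.
-/

lemma padicValNat_add_prime_pow_of_lt {p ℓ m : ℕ} [hp : Fact p.Prime] (hm : m ≠ 0)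
    (hlt : m < p ^ ℓ) : padicValNat p (m + p ^ ℓ) = padicValNat p m := by
  have hp0 : (p : ℚ) ≠ 0 := Nat.cast_ne_zero.mpr hp.out.ne_zero
  have hval : padicValNat p m < ℓ :=
    (Nat.pow_lt_pow_iff_right hp.out.one_lt).mp
      ((Nat.le_of_dvd (Nat.pos_of_ne_zero hm) pow_padicValNat_dvd).trans_lt hlt)
  have key := padicValRat.add_eq_of_lt (p := p) (q := m) (r := p ^ ℓ)
    (by positivity) (Nat.cast_ne_zero.mpr hm) (pow_ne_zero _ hp0)
    (by rw [padicValRat.pow, padicValRat.self hp.out.one_lt, padicValRat.of_nat, mul_one]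
        exact_mod_cast hval)
  exact_mod_cast key

lemma piList_succ (ℓ : ℕ) : piList (ℓ + 1) = piList ℓ ++ beta ℓ :: piList ℓ := by
  have hsplit : 2 ^ (ℓ + 1) - 1 = (2 ^ ℓ - 1 + 1) + (2 ^ ℓ - 1) := by
    have := Nat.one_le_two_pow (n := ℓ); rw [pow_succ]; omega
  have hmid : padicValNat 2 (2 ^ ℓ - 1 + 1) = ℓ := by
    rw [Nat.sub_add_cancel Nat.one_le_two_pow, padicValNat.prime_pow]
  have hright : ∀ j ∈ List.range (2 ^ ℓ - 1),
      padicValNat 2 (2 ^ ℓ - 1 + 1 + j + 1) = padicValNat 2 (j + 1) := by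
    intro j hj
    rw [List.mem_range] at hj
    rw [← padicValNat_add_prime_pow_of_lt (ℓ := ℓ) j.succ_ne_zero (by omega)]
    congr 1; omega
  simp only [piList, hsplit, List.range_add, List.range_succ, List.map_append, List.map_map,
    List.append_assoc, Function.comp_def, List.map_cons, List.singleton_append, hmid]
  congr 2
  exact List.map_congr_left fun j hj => by rw [hright j hj]

lemma inv_one_add_sqrt_two : (1 + √2)⁻¹ = √2 - 1 := by
  rw [inv_eq_of_mul_eq_one_right]
  nlinarith [Real.mul_self_sqrt (zero_le_two : (0 : ℝ) ≤ 2)]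

lemma beta_eq_one_add_pow_div (i : ℕ) : beta i = 1 + (1 + √2) ^ i / (1 + √2) := by
  rw [beta, Real.rpow_sub_one (by positivity), Real.rpow_natCast]

lemma beta_succ (i : ℕ) : beta (i + 1) = 1 + (1 + √2) ^ i := by
  rw [beta_eq_one_add_pow_div, pow_succ, mul_div_cancel_right₀ _ (by positivity)]

lemma piList_sum (ℓ : ℕ) : (piList ℓ).sum = (1 + √2) ^ ℓ - 1 := by
  induction ℓ with
  | zero => simp [piList]
  | succ ℓ ih =>
    rw [piList_succ, List.sum_append, List.sum_cons, ih, beta_eq_one_add_pow_div, div_eq_mul_inv,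
      inv_one_add_sqrt_two, pow_succ]
    ring

lemma sqrt_mul_eq_of_quadratic {B x b : ℝ} (hB : 0 ≤ B) (hx : 0 ≤ x)
    (hq : 2 * x ^ 2 + B * x - b * B = 0) : √(B * (B + 2 * x + 2 * b)) = B + 2 * x := by
  rw [show B * (B + 2 * x + 2 * b) = (B + 2 * x) ^ 2 by linear_combination (-2) * hq]
  exact Real.sqrt_sq (by positivity)

lemma div_sqrt_add_sqrt_eq {A B t : ℝ} (hA : 0 < A) (hB : 0 ≤ B) (h : t + √(B * A) = A) :
    t / √A + √B = √A := by
  have hsA : 0 < √A := Real.sqrt_pos.mpr hA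
  rw [Real.sqrt_mul hB] at h
  field_simp
  nlinarith [Real.sq_sqrt hA.le]

/-- with w_0 = [1] and
w_k = [π^(k-1)/√(μ_k-1), β_k/√(μ_k-1), w_{k-1}] for k ≥ 1, the sum of the
entries of w_k equals √(μ_k - 1) for all k ≥ 0. -/
theorem stmt13 (α μ : ℕ → ℝ) (w : ℕ → List ℝ)
    (hμ0 : μ 0 = 2)
    (hμ : ∀ i, μ (i + 1) = μ i + 2 * (α i + beta (i + 1) - 2))
    (hα : ∀ i, 1 < α i ∧
      2 * (α i - 1) ^ 2 + (μ i - 1) * (α i - 1) - (beta (i + 1) - 1) * (μ i - 1) = 0)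
    (hw0 : w 0 = [1])
    (hw : ∀ k : ℕ, w (k + 1) =
      ((piList k).map fun y => y / Real.sqrt (μ (k + 1) - 1))
        ++ [beta (k + 1) / Real.sqrt (μ (k + 1) - 1)] ++ w k) :
    ∀ k : ℕ, (w k).sum = Real.sqrt (μ k - 1) := by
  have hμ_gt : ∀ k, 1 < μ k := by
    intro k
    induction k with
    | zero => rw [hμ0]; norm_num
    | succ i ih =>
      have : 0 < (1 + √2) ^ i := by positivity
      rw [hμ i, beta_succ]; linarith [(hα i).1]
  intro k
  induction k with
  | zero => norm_num [hw0, hμ0]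
  | succ n ih =>
    obtain ⟨hα1, hq⟩ := hα n
    have hA : μ (n + 1) - 1 = (μ n - 1) + 2 * (α n - 1) + 2 * (beta (n + 1) - 1) := by
      rw [hμ n]; ring
    have hid : 2 * (beta (n + 1) - 1) + √((μ n - 1) * (μ (n + 1) - 1)) = μ (n + 1) - 1 := by
      rw [hA, sqrt_mul_eq_of_quadratic (by linarith [hμ_gt n]) (by linarith) hq]
      ring
    rw [hw n, List.sum_append, List.sum_append, ih, List.sum_singleton]
    simp only [div_eq_mul_inv, List.sum_map_mul_right, List.map_id']
    rw [← add_mul, ← div_eq_mul_inv]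
    convert div_sqrt_add_sqrt_eq (by linarith [hμ_gt (n + 1)]) (by linarith [hμ_gt n]) hid using 2
    rw [piList_sum, beta_succ]
    ring
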